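/- The map H¹(G, α, S) → Pic(R) sending the class of a partial 1-cocycle f to the isomorphism class [Q_f] is an injective group homomorphism. -/
import Mathlib


/-- A unital partial action of a group `G` on a commutative ring `S`.
The unital ideal `S_g` is `S * e g` where `e g` is a central idempotent,
and `act g` is the partial isomorphism `α_g` (extended to all of `S` by
first multiplying by the identity `e g⁻¹` of its domain ideal). -/
structure PartialAction (G : Type*) [Group G] (S : Type*) [CommRing S] where
  e : G → S
  act : G → S → S
  e_idem : ∀ g, e g * e g = e g
  e_one : e 1 = 1
  act_one : ∀ x, act 1 x = x
  act_add : ∀ g x y, act g (x + y) = act g x + act g y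
  act_mul : ∀ g x y, act g (x * y) = act g x * act g y
  act_restrict : ∀ g x, act g (x * e g⁻¹) = act g x
  act_mem : ∀ g x, act g x * e g = act g x
  act_e : ∀ g, act g (e g⁻¹) = e g
  act_inter : ∀ g h, act g (e g⁻¹ * e h) = e g * e (g * h)
  act_comp : ∀ g h x, act g (act h x * e g⁻¹) = act (g * h) (x * e h⁻¹) * e g
  act_inv : ∀ g x, act g⁻¹ (act g (x * e g⁻¹)) = x * e g⁻¹

namespace PartialAction

variable {G : Type*} [Group G] {S : Type*} [CommRing S] (P : PartialAction G S)

/-- The subring of subinvariants `S^α`. -/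
def invariants : Set S := {a | ∀ g : G, P.act g (a * P.e g⁻¹) = a * P.e g}

/-- `S ⊇ R` is a partial Galois extension: `R = S^α` and there is a
partial Galois coordinate system. -/
def IsPartialGalois [Fintype G] [DecidableEq G] (R : Subring S) : Prop :=
  ((R : Set S) = P.invariants) ∧
    ∃ m : ℕ, ∃ x y : Fin m → S, ∀ g : G,
      (∑ i : Fin m, x i * P.act g (y i * P.e g⁻¹)) = if g = 1 then 1 else 0

/-- A partial 1-cocycle with values in `S`: `f g` is invertible in the
unital ideal `S e g` with inverse `finv g`, and the cocycle identity holds. -/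
structure Cocycle where
  f : G → S
  finv : G → S
  f_mem : ∀ g, f g * P.e g = f g
  finv_mem : ∀ g, finv g * P.e g = finv g
  f_mul_finv : ∀ g, f g * finv g = P.e g
  cocycle : ∀ g h, f (g * h) * P.e g = f g * P.act g (f h * P.e g⁻¹)

variable {P}

theorem act_zero (g : G) : P.act g 0 = 0 := by
  have := P.act_add g 0 0
  simpa using this.symm

/-- The set `Q_f = {a ∈ S : α_g(a 1_{g⁻¹}) = f(g) a for all g}` attached to a map `f : G → S`. -/
def Qset (P : PartialAction G S) (f : G → S) : Set S :=
  {a | ∀ g : G, P.act g (a * P.e g⁻¹) = f g * a}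

/-- `Q_f` as an `R`-submodule of `S`, where `R` is a subring of invariants. -/
def Qmod (P : PartialAction G S) (R : Subring S)
    (hR : ∀ r ∈ R, ∀ g : G, P.act g (r * P.e g⁻¹) = r * P.e g)
    (f : G → S) : Submodule R S where
  carrier := Qset P f
  zero_mem' := by
    intro g
    simp [Qset, act_zero]
  add_mem' := by
    intro a b ha hb g
    have := P.act_add g (a * P.e g⁻¹) (b * P.e g⁻¹)
    rw [Qset] at *
    rw [add_mul, this, ha g, hb g, mul_add]
  smul_mem' := by
    intro c x hx g
    have hc : (c : S) ∈ (R : Set S) := c.2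
    have hcx : c • x = (c : S) * x := Subring.smul_def c x
    have hx' : ∀ g : G, P.act g (x * P.e g⁻¹) = f g * x := hx
    rw [hcx]
    have h1 : P.act g ((c : S) * x * P.e g⁻¹) = P.act g ((c : S)) * P.act g x := by
      rw [P.act_restrict, P.act_mul]
    have h2 : P.act g ((c : S)) = (c : S) * P.e g := by
      rw [← P.act_restrict g (c : S), hR c c.2 g]
    have h3 : P.act g x = f g * x := by
      rw [← P.act_restrict g x]; exact hx' g
    have h4 : (f g * x) * P.e g = f g * x := by
      have := P.act_mem g (x * P.e g⁻¹)
      rw [P.act_restrict, h3] at this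
      exact this
    rw [h1, h2, h3]
    have h5 : (c : S) * P.e g * (f g * x) = (c : S) * (f g * x * P.e g) := by ring
    rw [h5, h4]
    ring

end PartialAction

namespace PartialAction

variable {G : Type*} [Group G] {S : Type*} [CommRing S] {P : PartialAction G S}

theorem act_sum {ι : Type*} (s : Finset ι) (g : G) (f : ι → S) :
    P.act g (∑ i ∈ s, f i) = ∑ i ∈ s, P.act g (f i) :=
  map_sum (AddMonoidHom.mk' (P.act g) (P.act_add g)) f s

theorem inv_unique {e a x y : S} (hx : x * e = x) (hy : y * e = y)
    (hax : a * x = e) (hay : a * y = e) : x = y := by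
  calc x = x * (a * y) := by rw [hay, hx]
  _ = y * (a * x) := by ring
  _ = y := by rw [hax, hy]

theorem Cocycle.act_finv (c : P.Cocycle) (g h : G) :
    P.act g (c.finv h * P.e g⁻¹) = c.f g * c.finv (g * h) := by
  have hX : P.act g (c.f h * P.e g⁻¹) = c.finv g * c.f (g * h) * P.e g := by
    have h1 : c.finv g * (c.f (g * h) * P.e g) = c.finv g * (c.f g * P.act g (c.f h * P.e g⁻¹)) := by
      rw [c.cocycle g h]
    have h2 : c.finv g * c.f g * P.act g (c.f h * P.e g⁻¹) = P.act g (c.f h * P.e g⁻¹) := by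
      rw [mul_comm (c.finv g), c.f_mul_finv, mul_comm (P.e g), P.act_mem]
    calc P.act g (c.f h * P.e g⁻¹) = c.finv g * c.f g * P.act g (c.f h * P.e g⁻¹) := h2.symm
    _ = c.finv g * (c.f g * P.act g (c.f h * P.e g⁻¹)) := by ring
    _ = c.finv g * (c.f (g * h) * P.e g) := h1.symm
    _ = c.finv g * c.f (g * h) * P.e g := by ring
  refine inv_unique (e := P.e g * P.e (g*h)) (a := P.act g (c.f h * P.e g⁻¹)) ?_ ?_ ?_ ?_
  · -- act g (finv h * e g⁻¹) * (e g * e (g*h)) = itself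
    have h3 : P.e g * P.e (g * h) = P.act g (P.e g⁻¹ * P.e h) := (P.act_inter g h).symm
    rw [h3, ← P.act_mul]
    congr 1
    calc c.finv h * P.e g⁻¹ * (P.e g⁻¹ * P.e h) = (c.finv h * P.e h) * (P.e g⁻¹ * P.e g⁻¹) := by ring
    _ = c.finv h * P.e g⁻¹ := by rw [c.finv_mem, P.e_idem]
  · -- (f g * finv (g*h)) * (e g * e (g*h)) = itself
    calc c.f g * c.finv (g*h) * (P.e g * P.e (g*h))
        = (c.f g * P.e g) * (c.finv (g*h) * P.e (g*h)) := by ring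
    _ = c.f g * c.finv (g*h) := by rw [c.f_mem, c.finv_mem]
  · rw [← P.act_mul]
    have h4 : c.f h * P.e g⁻¹ * (c.finv h * P.e g⁻¹) = P.e g⁻¹ * P.e h := by
      calc c.f h * P.e g⁻¹ * (c.finv h * P.e g⁻¹) = (c.f h * c.finv h) * (P.e g⁻¹ * P.e g⁻¹) := by ring
      _ = P.e g⁻¹ * P.e h := by rw [c.f_mul_finv, P.e_idem]; ring
    rw [h4, P.act_inter]
  · rw [hX]
    calc c.finv g * c.f (g*h) * P.e g * (c.f g * c.finv (g*h))
        = (c.f g * c.finv g) * (c.f (g*h) * c.finv (g*h)) * P.e g := by ring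
    _ = P.e g * P.e (g*h) * P.e g := by rw [c.f_mul_finv, c.f_mul_finv]
    _ = P.e g * P.e (g*h) := by rw [mul_comm (P.e g) (P.e (g*h)), mul_assoc, P.e_idem]

/-- The inverse cocycle. -/
def Cocycle.inv (c : P.Cocycle) : P.Cocycle where
  f := c.finv
  finv := c.f
  f_mem := c.finv_mem
  finv_mem := c.f_mem
  f_mul_finv := fun g => by rw [mul_comm]; exact c.f_mul_finv g
  cocycle := fun g h => by
    rw [c.act_finv g h]
    calc c.finv (g*h) * P.e g = (c.f g * c.finv g) * c.finv (g*h) := by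
          rw [c.f_mul_finv]; ring
    _ = c.finv g * (c.f g * c.finv (g*h)) := by ring

/-- The trivial cocycle. -/
def trivCocycle (P : PartialAction G S) : P.Cocycle where
  f := P.e
  finv := P.e
  f_mem := P.e_idem
  finv_mem := P.e_idem
  f_mul_finv := P.e_idem
  cocycle := fun g h => by
    rw [mul_comm (P.e h) (P.e g⁻¹), P.act_inter, ← mul_assoc, P.e_idem, mul_comm]

end PartialAction
namespace PartialAction

variable {G : Type*} [Group G] {S : Type*} [CommRing S] {P : PartialAction G S}

/-- The `f`-twisted trace `t_f(a) = ∑_g f(g)⁻¹ α_g(a 1_{g⁻¹})`. -/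
def twTrace [Fintype G] (c : P.Cocycle) (a : S) : S :=
  ∑ g : G, c.finv g * P.act g (a * P.e g⁻¹)

theorem twTrace_mem [Fintype G] (c : P.Cocycle) (a : S) : twTrace c a ∈ Qset P c.f := by
  intro h
  have step : ∀ g : G, P.act h (c.finv g * P.act g (a * P.e g⁻¹) * P.e h⁻¹)
      = c.f h * P.e h * (c.finv (h*g) * P.act (h*g) (a * P.e (h*g)⁻¹)) := by
    intro g
    have harg : c.finv g * P.act g (a * P.e g⁻¹) * P.e h⁻¹
        = (c.finv g * P.e h⁻¹) * (P.act g (a * P.e g⁻¹) * P.e h⁻¹) := by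
      calc c.finv g * P.act g (a * P.e g⁻¹) * P.e h⁻¹
          = c.finv g * P.act g (a * P.e g⁻¹) * (P.e h⁻¹ * P.e h⁻¹) := by rw [P.e_idem]
      _ = (c.finv g * P.e h⁻¹) * (P.act g (a * P.e g⁻¹) * P.e h⁻¹) := by ring
    rw [harg, P.act_mul, c.act_finv h g]
    have hcomp : P.act h (P.act g (a * P.e g⁻¹) * P.e h⁻¹) = P.act (h*g) (a * P.e g⁻¹) * P.e h := by
      rw [P.act_restrict g a, P.act_comp]
    rw [hcomp]
    have hsplit : P.act (h*g) (a * P.e g⁻¹) = P.act (h*g) (a * P.e (h*g)⁻¹) * (P.e (h*g) * P.e h) := by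
      have h1 : P.act (h*g) (P.e (h*g)⁻¹ * P.e g⁻¹) = P.e (h*g) * P.e h := by
        have := P.act_inter (h*g) g⁻¹
        simpa using this
      calc P.act (h*g) (a * P.e g⁻¹) = P.act (h*g) (a * P.e (h*g)⁻¹ * (P.e (h*g)⁻¹ * P.e g⁻¹)) := by
            rw [show a * P.e (h*g)⁻¹ * (P.e (h*g)⁻¹ * P.e g⁻¹)
                = a * P.e g⁻¹ * (P.e (h*g)⁻¹ * P.e (h*g)⁻¹) by ring, P.e_idem, P.act_restrict]
      _ = P.act (h*g) (a * P.e (h*g)⁻¹) * (P.e (h*g) * P.e h) := by rw [P.act_mul, h1]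
    rw [hsplit]
    have hfe : c.finv (h*g) * P.e (h*g) = c.finv (h*g) := c.finv_mem (h*g)
    calc c.f h * c.finv (h*g) * (P.act (h*g) (a * P.e (h*g)⁻¹) * (P.e (h*g) * P.e h) * P.e h)
        = c.f h * P.e h * ((c.finv (h*g) * P.e (h*g)) * P.act (h*g) (a * P.e (h*g)⁻¹)) * P.e h := by ring
    _ = c.f h * P.e h * (c.finv (h*g) * P.act (h*g) (a * P.e (h*g)⁻¹)) * P.e h := by rw [hfe]
    _ = (c.f h * P.e h * P.e h) * (c.finv (h*g) * P.act (h*g) (a * P.e (h*g)⁻¹)) := by ring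
    _ = c.f h * P.e h * (c.finv (h*g) * P.act (h*g) (a * P.e (h*g)⁻¹)) := by
          rw [mul_assoc (c.f h), P.e_idem]
  calc P.act h (twTrace c a * P.e h⁻¹)
      = ∑ g : G, P.act h (c.finv g * P.act g (a * P.e g⁻¹) * P.e h⁻¹) := by
        rw [twTrace, Finset.sum_mul, act_sum]
  _ = ∑ g : G, c.f h * P.e h * (c.finv (h*g) * P.act (h*g) (a * P.e (h*g)⁻¹)) := by
        exact Finset.sum_congr rfl fun g _ => step g
  _ = c.f h * P.e h * ∑ g : G, c.finv (h*g) * P.act (h*g) (a * P.e (h*g)⁻¹) := by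
        rw [Finset.mul_sum]
  _ = c.f h * P.e h * twTrace c a := by
        congr 1
        exact Fintype.sum_equiv (Equiv.mulLeft h) _ _ (fun g => rfl)
  _ = c.f h * twTrace c a := by rw [c.f_mem]

theorem twTrace_qmul {f1 f2 : G → S} {a b : S} (ha : a ∈ Qset P f1) (hb : b ∈ Qset P f2) (g : G) :
    P.act g (a * b * P.e g⁻¹) = f1 g * f2 g * (a * b) := by
  have harg : a * b * P.e g⁻¹ = (a * P.e g⁻¹) * (b * P.e g⁻¹) := by
    rw [show (a * P.e g⁻¹) * (b * P.e g⁻¹) = a * b * (P.e g⁻¹ * P.e g⁻¹) by ring, P.e_idem]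
  rw [harg, P.act_mul, ha g, hb g]; ring

end PartialAction
namespace PartialAction

variable {G : Type*} [Group G] {S : Type*} [CommRing S] {P : PartialAction G S}

/-- The trace map `t(a) = ∑_g α_g(a 1_{g⁻¹})`. -/
def tr [Fintype G] (P : PartialAction G S) (a : S) : S :=
  ∑ g : G, P.act g (a * P.e g⁻¹)

theorem tr_eq_twTrace [Fintype G] (a : S) : P.tr a = twTrace (trivCocycle P) a := by
  refine Finset.sum_congr rfl fun g _ => ?_
  show P.act g (a * P.e g⁻¹) = P.e g * P.act g (a * P.e g⁻¹)
  rw [mul_comm (P.e g) (P.act g (a * P.e g⁻¹)), P.act_mem]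

theorem tr_mem_invariants [Fintype G] (a : S) : P.tr a ∈ P.invariants := by
  intro g
  have h := twTrace_mem (trivCocycle P) a g
  rw [← tr_eq_twTrace] at h
  rw [h]
  show P.e g * P.tr a = P.tr a * P.e g
  ring

theorem tr_zero [Fintype G] : P.tr (0 : S) = 0 := by
  simp [tr, act_zero]

theorem tr_add [Fintype G] (a b : S) : P.tr (a + b) = P.tr a + P.tr b := by
  rw [tr, tr, tr, ← Finset.sum_add_distrib]
  refine Finset.sum_congr rfl fun g _ => ?_
  rw [add_mul, P.act_add]

theorem tr_smul [Fintype G] {r : S} (hr : r ∈ P.invariants) (a : S) :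
    P.tr (r * a) = r * P.tr a := by
  rw [tr, tr, Finset.mul_sum]
  refine Finset.sum_congr rfl fun g _ => ?_
  have harg : r * a * P.e g⁻¹ = (r * P.e g⁻¹) * (a * P.e g⁻¹) := by
    rw [show (r * P.e g⁻¹) * (a * P.e g⁻¹) = r * a * (P.e g⁻¹ * P.e g⁻¹) by ring, P.e_idem]
  rw [harg, P.act_mul, hr g, mul_assoc, mul_comm (P.e g) (P.act g (a * P.e g⁻¹)), P.act_mem]

theorem tr_repr [Fintype G] [DecidableEq G] {m : ℕ} {x y : Fin m → S}
    (hxy : ∀ g : G, (∑ i : Fin m, x i * P.act g (y i * P.e g⁻¹)) = if g = 1 then 1 else 0)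
    (a : S) : ∑ i : Fin m, x i * P.tr (y i * a) = a := by
  have key : ∀ i g, x i * P.act g (y i * a * P.e g⁻¹)
      = x i * P.act g (y i * P.e g⁻¹) * P.act g (a * P.e g⁻¹) := by
    intro i g
    have harg : y i * a * P.e g⁻¹ = (y i * P.e g⁻¹) * (a * P.e g⁻¹) := by
      rw [show (y i * P.e g⁻¹) * (a * P.e g⁻¹) = y i * a * (P.e g⁻¹ * P.e g⁻¹) by ring, P.e_idem]
    rw [harg, P.act_mul, mul_assoc]
  calc ∑ i : Fin m, x i * P.tr (y i * a)
      = ∑ i : Fin m, ∑ g : G, x i * P.act g (y i * a * P.e g⁻¹) := by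
        refine Finset.sum_congr rfl fun i _ => ?_; rw [tr, Finset.mul_sum]
  _ = ∑ g : G, ∑ i : Fin m, x i * P.act g (y i * P.e g⁻¹) * P.act g (a * P.e g⁻¹) := by
        rw [Finset.sum_comm]
        exact Finset.sum_congr rfl fun g _ => Finset.sum_congr rfl fun i _ => key i g
  _ = ∑ g : G, (if g = 1 then (1:S) else 0) * P.act g (a * P.e g⁻¹) := by
        refine Finset.sum_congr rfl fun g _ => ?_
        rw [← Finset.sum_mul, hxy g]
  _ = a := by
        simp only [ite_mul, one_mul, zero_mul]
        rw [Finset.sum_ite_eq' Finset.univ (1 : G)]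
        simp [P.act_one, P.e_one]

/-- The image of the trace, as an ideal of `R`. -/
def trIdeal [Fintype G] (P : PartialAction G S) (R : Subring S)
    (hinv : (R : Set S) = P.invariants) : Ideal R where
  carrier := {r : R | ∃ a : S, (r : S) = P.tr a}
  zero_mem' := ⟨0, by rw [tr_zero]; simp⟩
  add_mem' := by
    rintro r r' ⟨a, ha⟩ ⟨b, hb⟩
    exact ⟨a + b, by rw [tr_add, ← ha, ← hb]; simp⟩
  smul_mem' := by
    rintro c r ⟨a, ha⟩
    refine ⟨(c : S) * a, ?_⟩
    have hc : (c : S) ∈ P.invariants := by rw [← hinv]; exact c.2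
    rw [tr_smul hc, ← ha]
    simp [Subring.smul_def]

theorem mem_trIdeal_iff [Fintype G] {R : Subring S} {hinv : (R : Set S) = P.invariants}
    (r : R) : r ∈ trIdeal P R hinv ↔ ∃ a : S, (r : S) = P.tr a := Iff.rfl

theorem exists_tr_one [Fintype G] [DecidableEq G] (R : Subring S)
    (hGal : P.IsPartialGalois R) : ∃ cS : S, P.tr cS = 1 := by
  classical
  obtain ⟨hinv, m, x, y, hxy⟩ := hGal
  have htrR : ∀ a : S, P.tr a ∈ R := fun a => by
    rw [← SetLike.mem_coe, hinv]; exact tr_mem_invariants a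
  have hmemInv : ∀ r : R, (r : S) ∈ P.invariants := fun r => by
    rw [← hinv]; exact r.2
  have hsmul : ∀ (r : R) (s : S), r • s = (r : S) * s := fun r s => rfl
  set I : Ideal R := trIdeal P R hinv with hI
  have hrepr : ∀ a : S, ∑ i : Fin m, (⟨P.tr (y i * a), htrR _⟩ : R) • x i = a := by
    intro a
    calc ∑ i : Fin m, (⟨P.tr (y i * a), htrR _⟩ : R) • x i
        = ∑ i : Fin m, x i * P.tr (y i * a) := by
          refine Finset.sum_congr rfl fun i _ => ?_
          rw [hsmul]; ring
    _ = a := tr_repr hxy a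
  have hfg : (⊤ : Submodule R S).FG := by
    refine ⟨Finset.univ.image x, ?_⟩
    rw [eq_top_iff]
    intro a _
    rw [← hrepr a]
    refine Submodule.sum_mem _ fun i _ => Submodule.smul_mem _ _ ?_
    exact Submodule.subset_span (Finset.mem_coe.2 (Finset.mem_image_of_mem x (Finset.mem_univ i)))
  have hle : (⊤ : Submodule R S) ≤ I • (⊤ : Submodule R S) := by
    intro a _
    rw [← hrepr a]
    refine Submodule.sum_mem _ fun i _ => ?_
    exact Submodule.smul_mem_smul ⟨y i * a, rfl⟩ trivial
  obtain ⟨r, hr1, hr0⟩ :=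
    Submodule.exists_sub_one_mem_and_smul_eq_zero_of_fg_of_le_smul I ⊤ hfg hle
  have hrz : r = 0 := by
    have h1 := hr0 (1 : S) trivial
    rw [hsmul, mul_one] at h1
    exact Subtype.ext h1
  rw [hrz, zero_sub] at hr1
  have h1I : (1 : R) ∈ I := by
    have := I.neg_mem hr1
    rwa [neg_neg] at this
  obtain ⟨a, ha⟩ := h1I
  exact ⟨a, by rw [← ha]; rfl⟩

end PartialAction
namespace PartialAction

variable {G : Type*} [Group G] {S : Type*} [CommRing S] {P : PartialAction G S}

theorem pair_lemma [Fintype G] [DecidableEq G] {m : ℕ} {x y : Fin m → S}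
    (hxy : ∀ g : G, (∑ i : Fin m, x i * P.act g (y i * P.e g⁻¹)) = if g = 1 then 1 else 0)
    (g h : G) (b : S) :
    ∑ i : Fin m, P.act g (b * x i * P.e g⁻¹) * P.act h (y i * P.e h⁻¹)
      = if g = h then P.act g (b * P.e g⁻¹) else 0 := by
  have key : ∀ i : Fin m, P.act g (b * x i * P.e g⁻¹) * P.act h (y i * P.e h⁻¹)
      = P.act g ((x i * P.act (g⁻¹*h) (y i * P.e (g⁻¹*h)⁻¹)) * (b * P.e g⁻¹)) := by
    intro i
    have hBg : P.act h (y i * P.e h⁻¹) * P.e g = P.act h (y i * P.e (h⁻¹*g)) := by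
      calc P.act h (y i * P.e h⁻¹) * P.e g
          = P.act h (y i * P.e h⁻¹) * P.e h * P.e g := by rw [P.act_mem]
      _ = P.act h (y i * P.e h⁻¹) * P.act h (P.e h⁻¹ * P.e (h⁻¹*g)) := by
            rw [mul_assoc, P.act_inter h (h⁻¹*g), mul_inv_cancel_left]
      _ = P.act h (y i * P.e h⁻¹ * (P.e h⁻¹ * P.e (h⁻¹*g))) := by rw [← P.act_mul]
      _ = P.act h (y i * P.e (h⁻¹*g) * (P.e h⁻¹ * P.e h⁻¹)) := congrArg _ (by ring)
      _ = P.act h (y i * P.e (h⁻¹*g) * P.e h⁻¹) := by rw [P.e_idem]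
      _ = P.act h (y i * P.e (h⁻¹*g)) := P.act_restrict h _
    have hcomp : P.act h (y i * P.e (h⁻¹*g)) * P.e g
        = P.act g (P.act (g⁻¹*h) (y i) * P.e g⁻¹) := by
      have hc := P.act_comp g (g⁻¹*h) (y i)
      rw [mul_inv_cancel_left, mul_inv_rev, inv_inv] at hc
      exact hc.symm
    have hfull : P.act h (y i * P.e h⁻¹) * P.e g
        = P.act g (P.act (g⁻¹*h) (y i) * P.e g⁻¹) := by
      conv_lhs => rw [show P.e g = P.e g * P.e g from (P.e_idem g).symm]
      rw [← mul_assoc, hBg, hcomp]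
    calc P.act g (b * x i * P.e g⁻¹) * P.act h (y i * P.e h⁻¹)
        = P.act g (b * x i * P.e g⁻¹) * P.e g * P.act h (y i * P.e h⁻¹) := by rw [P.act_mem]
    _ = P.act g (b * x i * P.e g⁻¹) * (P.act h (y i * P.e h⁻¹) * P.e g) := by ring
    _ = P.act g (b * x i * P.e g⁻¹) * P.act g (P.act (g⁻¹*h) (y i) * P.e g⁻¹) := by rw [hfull]
    _ = P.act g (b * x i * P.e g⁻¹ * (P.act (g⁻¹*h) (y i) * P.e g⁻¹)) := by rw [← P.act_mul]
    _ = P.act g ((x i * P.act (g⁻¹*h) (y i)) * (b * (P.e g⁻¹ * P.e g⁻¹))) := congrArg _ (by ring)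
    _ = P.act g ((x i * P.act (g⁻¹*h) (y i)) * (b * P.e g⁻¹)) := by rw [P.e_idem]
    _ = P.act g ((x i * P.act (g⁻¹*h) (y i * P.e (g⁻¹*h)⁻¹)) * (b * P.e g⁻¹)) := by
          rw [P.act_restrict]
  calc ∑ i : Fin m, P.act g (b * x i * P.e g⁻¹) * P.act h (y i * P.e h⁻¹)
      = P.act g ((∑ i : Fin m, x i * P.act (g⁻¹*h) (y i * P.e (g⁻¹*h)⁻¹)) * (b * P.e g⁻¹)) := by
        rw [Finset.sum_congr rfl fun i _ => key i, Finset.sum_mul, ← act_sum]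
  _ = P.act g ((if g⁻¹*h = 1 then (1:S) else 0) * (b * P.e g⁻¹)) := by rw [hxy (g⁻¹*h)]
  _ = if g = h then P.act g (b * P.e g⁻¹) else 0 := by
        by_cases hgh : g = h
        · rw [if_pos hgh, if_pos (by rw [hgh, inv_mul_cancel]), one_mul]
        · rw [if_neg hgh, if_neg (fun hc => hgh ((inv_mul_eq_one).1 hc)), zero_mul, act_zero]

end PartialAction
namespace PartialAction

variable {G : Type*} [Group G] {S : Type*} [CommRing S] {P : PartialAction G S}

theorem Cocycle.finv_mul_f (c : P.Cocycle) (g : G) : c.finv g * c.f g = P.e g := by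
  rw [mul_comm]; exact c.f_mul_finv g

theorem e_mul_act (g : G) (x : S) : P.e g * P.act g x = P.act g x := by
  rw [mul_comm, P.act_mem]

theorem qmul_mem_R {c : P.Cocycle} {a b : S} {R : Subring S}
    (hinv : (R : Set S) = P.invariants)
    (ha : a ∈ Qset P c.f) (hb : b ∈ Qset P c.finv) : a * b ∈ R := by
  rw [← SetLike.mem_coe, hinv]
  intro g
  rw [twTrace_qmul ha hb g, c.f_mul_finv]
  ring

/-- Existence of a dual system for `Q_f`: elements `u_i ∈ Q_f`, `v_i ∈ Q_{f⁻¹}`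
with `∑ u_i v_i = 1`. -/
theorem exists_dual [Fintype G] [DecidableEq G] (R : Subring S)
    (hGal : P.IsPartialGalois R) (c : P.Cocycle) :
    ∃ (n : ℕ) (u v : Fin n → S), (∀ i, u i ∈ Qset P c.f) ∧ (∀ i, v i ∈ Qset P c.finv) ∧
      (∑ i, u i * v i) = 1 := by
  obtain ⟨cS, hcS⟩ := exists_tr_one R hGal
  obtain ⟨hinv, m, x, y, hxy⟩ := hGal
  refine ⟨m, fun i => twTrace c (cS * x i), fun i => twTrace c.inv (y i),
    fun i => twTrace_mem c _, fun i => twTrace_mem c.inv _, ?_⟩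
  calc ∑ i : Fin m, twTrace c (cS * x i) * twTrace c.inv (y i)
      = ∑ i : Fin m, ∑ g : G, ∑ h : G,
          (c.finv g * P.act g (cS * x i * P.e g⁻¹)) * (c.f h * P.act h (y i * P.e h⁻¹)) := by
        exact Finset.sum_congr rfl fun i _ => Finset.sum_mul_sum _ _ _ _
  _ = ∑ g : G, ∑ h : G, ∑ i : Fin m,
          (c.finv g * P.act g (cS * x i * P.e g⁻¹)) * (c.f h * P.act h (y i * P.e h⁻¹)) := by
        rw [Finset.sum_comm]
        exact Finset.sum_congr rfl fun g _ => Finset.sum_comm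
  _ = ∑ g : G, ∑ h : G, c.finv g * c.f h *
          ∑ i : Fin m, P.act g (cS * x i * P.e g⁻¹) * P.act h (y i * P.e h⁻¹) := by
        refine Finset.sum_congr rfl fun g _ => Finset.sum_congr rfl fun h _ => ?_
        rw [Finset.mul_sum]
        exact Finset.sum_congr rfl fun i _ => by ring
  _ = ∑ g : G, ∑ h : G, (if g = h then c.finv g * c.f h * P.act g (cS * P.e g⁻¹) else 0) := by
        refine Finset.sum_congr rfl fun g _ => Finset.sum_congr rfl fun h _ => ?_
        rw [pair_lemma hxy g h cS, mul_ite, mul_zero]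
  _ = ∑ g : G, c.finv g * c.f g * P.act g (cS * P.e g⁻¹) := by
        refine Finset.sum_congr rfl fun g _ => ?_
        rw [Finset.sum_ite_eq Finset.univ g (fun h => c.finv g * c.f h * P.act g (cS * P.e g⁻¹))]
        simp
  _ = ∑ g : G, P.act g (cS * P.e g⁻¹) := by
        refine Finset.sum_congr rfl fun g _ => ?_
        rw [c.finv_mul_f, e_mul_act]
  _ = 1 := hcS

end PartialAction
set_option maxHeartbeats 1000000 in
set_option synthInstance.maxHeartbeats 1000000 in
open TensorProduct in
/-- the map `H¹(G,α,S) → Pic(R)`, `cls f ↦ [Q_f]`, is an injective group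
homomorphism: it is multiplicative (via `Q_f ⊗ Q_{f'} ≅ Q_{ff'}`), and two cocycles have
isomorphic modules `Q_f ≅ Q_{f'}` iff they are cohomologous. -/
theorem H1_to_Pic_injective_hom {G : Type*} [CommGroup G] [Fintype G] [DecidableEq G]
    {S : Type*} [CommRing S] (P : PartialAction G S) (R : Subring S)
    (hR : ∀ r ∈ R, ∀ g : G, P.act g (r * P.e g⁻¹) = r * P.e g)
    (hGal : P.IsPartialGalois R) :
    (∀ c c' cc' : P.Cocycle, (∀ g : G, cc'.f g = c.f g * c'.f g) →
      Nonempty ((PartialAction.Qmod P R hR c.f ⊗[R] PartialAction.Qmod P R hR c'.f)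
        ≃ₗ[R] PartialAction.Qmod P R hR cc'.f)) ∧
    (∀ c c' : P.Cocycle,
      Nonempty ((PartialAction.Qmod P R hR c.f) ≃ₗ[R] (PartialAction.Qmod P R hR c'.f)) ↔
        ∃ u : Sˣ, ∀ g : G,
          c.f g = c'.f g * (P.act g ((u : S) * P.e g⁻¹) * ((u⁻¹ : Sˣ) : S))) := by
  classical
  have hinv : (R : Set S) = P.invariants := hGal.1
  have hsmulS : ∀ (r : R) (s : S), r • s = (r : S) * s := fun r s => rfl
  constructor
  · -- multiplicativity
    rintro c c' cc' hmul
    obtain ⟨n, u, v, hu, hv, huv⟩ := PartialAction.exists_dual R hGal c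
    have hmem_mul : ∀ a b : S, a ∈ PartialAction.Qset P c.f → b ∈ PartialAction.Qset P c'.f →
        a * b ∈ PartialAction.Qset P cc'.f := by
      intro a b ha hb g
      rw [PartialAction.twTrace_qmul ha hb g, ← hmul g]
    have hmem_v : ∀ (i : Fin n) (b : S), b ∈ PartialAction.Qset P cc'.f →
        v i * b ∈ PartialAction.Qset P c'.f := by
      intro i b hb g
      rw [PartialAction.twTrace_qmul (hv i) hb g, hmul g,
        show c.finv g * (c.f g * c'.f g) = c'.f g * (c.finv g * c.f g) by ring,
        c.finv_mul_f, c'.f_mem]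
    have hmem_vR : ∀ (i : Fin n) (a : S), a ∈ PartialAction.Qset P c.f → v i * a ∈ R := by
      intro i a ha
      rw [mul_comm]
      exact PartialAction.qmul_mem_R hinv ha (hv i)
    set M := PartialAction.Qmod P R hR c.f with hM
    set M' := PartialAction.Qmod P R hR c'.f with hM'
    set N := PartialAction.Qmod P R hR cc'.f with hN
    have haM : ∀ a : M, (a : S) ∈ PartialAction.Qset P c.f := fun a => a.2
    have haM' : ∀ b : M', (b : S) ∈ PartialAction.Qset P c'.f := fun b => b.2
    have haN : ∀ b : N, (b : S) ∈ PartialAction.Qset P cc'.f := fun b => b.2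
    let bil : M →ₗ[R] M' →ₗ[R] N := LinearMap.mk₂ R
      (fun a b => ⟨(a : S) * (b : S), hmem_mul _ _ (haM a) (haM' b)⟩)
      (fun a₁ a₂ b => Subtype.ext (by simp [add_mul]))
      (fun r a b => Subtype.ext (by simp [hsmulS, mul_assoc]))
      (fun a b₁ b₂ => Subtype.ext (by simp [mul_add]))
      (fun r a b => Subtype.ext (by simp [hsmulS]; ring))
    let μ : (M ⊗[R] M') →ₗ[R] N := TensorProduct.lift bil
    let Lv : Fin n → (N →ₗ[R] M') := fun i =>
      { toFun := fun b => ⟨v i * (b : S), hmem_v i _ (haN b)⟩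
        map_add' := fun b₁ b₂ => Subtype.ext (by simp [mul_add])
        map_smul' := fun r b => Subtype.ext (by simp [hsmulS]; ring) }
    let ν : N →ₗ[R] (M ⊗[R] M') :=
      ∑ i : Fin n, (TensorProduct.mk R M M' ⟨u i, hu i⟩).comp (Lv i)
    have hμtmul : ∀ (a : M) (b : M'), μ (a ⊗ₜ[R] b) = ⟨(a : S) * (b : S), hmem_mul _ _ (haM a) (haM' b)⟩ :=
      fun a b => rfl
    have hν : ∀ b : N, ν b = ∑ i : Fin n, (⟨u i, hu i⟩ : M) ⊗ₜ[R] (Lv i b) := by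
      intro b
      simp [ν, LinearMap.sum_apply]
    refine ⟨LinearEquiv.ofLinear μ ν ?_ ?_⟩
    · apply LinearMap.ext
      intro b
      apply Subtype.ext
      rw [LinearMap.comp_apply, LinearMap.id_apply, hν b, map_sum]
      have : ∀ i : Fin n, μ ((⟨u i, hu i⟩ : M) ⊗ₜ[R] (Lv i b)) =
          ⟨u i * (v i * (b : S)), hmem_mul _ _ (hu i) (hmem_v i _ (haN b))⟩ :=
        fun i => rfl
      rw [Finset.sum_congr rfl fun i _ => this i]
      push_cast
      calc ∑ i : Fin n, u i * (v i * (b : S)) = (∑ i : Fin n, u i * v i) * (b : S) := by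
            rw [Finset.sum_mul]
            exact Finset.sum_congr rfl fun i _ => by ring
      _ = (b : S) := by rw [huv, one_mul]
    · apply TensorProduct.ext'
      intro a b
      rw [LinearMap.comp_apply, LinearMap.id_apply, hμtmul a b, hν]
      have hterm : ∀ i : Fin n,
          (⟨u i, hu i⟩ : M) ⊗ₜ[R] (Lv i ⟨(a : S) * (b : S), hmem_mul _ _ (haM a) (haM' b)⟩)
            = ((⟨v i * (a : S), hmem_vR i _ (haM a)⟩ : R) • (⟨u i, hu i⟩ : M)) ⊗ₜ[R] b := by
        intro i
        have hLv : Lv i ⟨(a : S) * (b : S), hmem_mul _ _ (haM a) (haM' b)⟩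
            = (⟨v i * (a : S), hmem_vR i _ (haM a)⟩ : R) • b := by
          apply Subtype.ext
          simp [Lv, hsmulS]
          ring
        rw [hLv, TensorProduct.smul_tmul]
      rw [Finset.sum_congr rfl fun i _ => hterm i, ← TensorProduct.sum_tmul]
      congr 1
      apply Subtype.ext
      push_cast [hsmulS]
      calc ∑ i : Fin n, v i * (a : S) * u i = (∑ i : Fin n, u i * v i) * (a : S) := by
            rw [Finset.sum_mul]
            exact Finset.sum_congr rfl fun i _ => by ring
      _ = (a : S) := by rw [huv, one_mul]
  · -- cohomologous iff isomorphic
    intro c c'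
    constructor
    · -- forward: iso implies cohomologous
      rintro ⟨φ⟩
      obtain ⟨n, u, v, hu, hv, huv⟩ := PartialAction.exists_dual R hGal c
      obtain ⟨n', u', v', hu', hv', huv'⟩ := PartialAction.exists_dual R hGal c'
      set M := PartialAction.Qmod P R hR c.f with hM
      set M' := PartialAction.Qmod P R hR c'.f with hM'
      have haM : ∀ a : M, (a : S) ∈ PartialAction.Qset P c.f := fun a => a.2
      have haM' : ∀ b : M', (b : S) ∈ PartialAction.Qset P c'.f := fun b => b.2
      have hvR : ∀ (i : Fin n) (a : S), a ∈ PartialAction.Qset P c.f → v i * a ∈ R := by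
        intro i a ha
        rw [mul_comm]
        exact PartialAction.qmul_mem_R hinv ha (hv i)
      have hvR' : ∀ (i : Fin n') (b : S), b ∈ PartialAction.Qset P c'.f → v' i * b ∈ R := by
        intro i b hb
        rw [mul_comm]
        exact PartialAction.qmul_mem_R hinv hb (hv' i)
      set s : S := ∑ i : Fin n', (φ.symm ⟨u' i, hu' i⟩ : S) * v' i with hs
      set s' : S := ∑ j : Fin n, (φ ⟨u j, hu j⟩ : S) * v j with hs'
      have key : ∀ b : M', (φ.symm b : S) = s * (b : S) := by
        intro b
        have hbdec : b = ∑ i : Fin n', (⟨v' i * (b : S), hvR' i _ (haM' b)⟩ : R) • ⟨u' i, hu' i⟩ := by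
          apply Subtype.ext
          push_cast [hsmulS]
          calc (b : S) = (∑ i : Fin n', u' i * v' i) * (b : S) := by rw [huv', one_mul]
          _ = ∑ i : Fin n', v' i * (b : S) * u' i := by
                rw [Finset.sum_mul]
                exact Finset.sum_congr rfl fun i _ => by ring
        calc (φ.symm b : S) = (φ.symm (∑ i : Fin n', (⟨v' i * (b : S), hvR' i _ (haM' b)⟩ : R) • ⟨u' i, hu' i⟩) : S) := by
              rw [← hbdec]
        _ = ∑ i : Fin n', (v' i * (b : S)) * (φ.symm ⟨u' i, hu' i⟩ : S) := by
              rw [map_sum]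
              push_cast [hsmulS]
              exact Finset.sum_congr rfl fun i _ => by
                rw [map_smul]
                push_cast [hsmulS]
                ring
        _ = s * (b : S) := by
              rw [hs, Finset.sum_mul]
              exact Finset.sum_congr rfl fun i _ => by ring
      have key' : ∀ a : M, (φ a : S) = s' * (a : S) := by
        intro a
        have hadec : a = ∑ j : Fin n, (⟨v j * (a : S), hvR j _ (haM a)⟩ : R) • ⟨u j, hu j⟩ := by
          apply Subtype.ext
          push_cast [hsmulS]
          calc (a : S) = (∑ j : Fin n, u j * v j) * (a : S) := by rw [huv, one_mul]
          _ = ∑ j : Fin n, v j * (a : S) * u j := by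
                rw [Finset.sum_mul]
                exact Finset.sum_congr rfl fun j _ => by ring
        calc (φ a : S) = (φ (∑ j : Fin n, (⟨v j * (a : S), hvR j _ (haM a)⟩ : R) • ⟨u j, hu j⟩) : S) := by
              rw [← hadec]
        _ = ∑ j : Fin n, (v j * (a : S)) * (φ ⟨u j, hu j⟩ : S) := by
              rw [map_sum]
              push_cast [hsmulS]
              exact Finset.sum_congr rfl fun j _ => by
                rw [map_smul]
                push_cast [hsmulS]
                ring
        _ = s' * (a : S) := by
              rw [hs', Finset.sum_mul]
              exact Finset.sum_congr rfl fun j _ => by ring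
      have hfix : ∀ j : Fin n, s * (s' * u j) = u j := by
        intro j
        have h1 := key (φ ⟨u j, hu j⟩)
        rw [LinearEquiv.symm_apply_apply, key' ⟨u j, hu j⟩] at h1
        exact h1.symm
      have hss' : s * s' = 1 := by
        calc s * s' = s * s' * ∑ j : Fin n, u j * v j := by rw [huv, mul_one]
        _ = ∑ j : Fin n, (s * (s' * u j)) * v j := by
              rw [Finset.mul_sum]
              exact Finset.sum_congr rfl fun j _ => by ring
        _ = ∑ j : Fin n, u j * v j := by
              exact Finset.sum_congr rfl fun j _ => by rw [hfix j]
        _ = 1 := huv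
      refine ⟨⟨s, s', hss', by rw [mul_comm]; exact hss'⟩, ?_⟩
      intro g
      show c.f g = c'.f g * (P.act g (s * P.e g⁻¹) * s')
      have hact : P.act g (s * P.e g⁻¹) = c.f g * c'.finv g * s := by
        rw [hs, Finset.sum_mul, PartialAction.act_sum, Finset.mul_sum]
        refine Finset.sum_congr rfl fun i _ => ?_
        rw [PartialAction.twTrace_qmul ((φ.symm ⟨u' i, hu' i⟩).2) (hv' i) g]
      rw [hact]
      calc c.f g = c.f g * P.e g * (s * s') := by rw [c.f_mem, hss', mul_one]
      _ = c'.f g * (c.f g * c'.finv g * s * s') := by rw [← c'.f_mul_finv g]; ring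
    · -- backward: cohomologous implies iso
      rintro ⟨U, hU⟩
      have m1 : ∀ b : S, b ∈ PartialAction.Qset P c'.f →
          (U : S) * b ∈ PartialAction.Qset P c.f := by
        intro b hb g
        have harg : (U : S) * b * P.e g⁻¹ = ((U : S) * P.e g⁻¹) * (b * P.e g⁻¹) := by
          rw [show ((U : S) * P.e g⁻¹) * (b * P.e g⁻¹) = (U : S) * b * (P.e g⁻¹ * P.e g⁻¹) by ring,
            P.e_idem]
        rw [harg, P.act_mul, hb g, hU g]
        calc P.act g ((U : S) * P.e g⁻¹) * (c'.f g * b)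
            = c'.f g * P.act g ((U : S) * P.e g⁻¹) * (1 : S) * b := by ring
        _ = c'.f g * P.act g ((U : S) * P.e g⁻¹) * (((U⁻¹ : Sˣ) : S) * (U : S)) * b := by
              rw [Units.inv_mul]
        _ = c'.f g * (P.act g ((U : S) * P.e g⁻¹) * ((U⁻¹ : Sˣ) : S)) * ((U : S) * b) := by ring
      have hee : ∀ g : G, P.act g (((U⁻¹ : Sˣ) : S) * P.e g⁻¹) * P.act g ((U : S) * P.e g⁻¹)
          = P.e g := by
        intro g
        rw [← P.act_mul]
        have harg : ((U⁻¹ : Sˣ) : S) * P.e g⁻¹ * ((U : S) * P.e g⁻¹) = P.e g⁻¹ := by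
          calc ((U⁻¹ : Sˣ) : S) * P.e g⁻¹ * ((U : S) * P.e g⁻¹)
              = (((U⁻¹ : Sˣ) : S) * (U : S)) * (P.e g⁻¹ * P.e g⁻¹) := by ring
          _ = P.e g⁻¹ := by rw [Units.inv_mul, P.e_idem, one_mul]
        rw [harg, P.act_e]
      have m2 : ∀ a : S, a ∈ PartialAction.Qset P c.f →
          ((U⁻¹ : Sˣ) : S) * a ∈ PartialAction.Qset P c'.f := by
        intro a ha g
        have harg : ((U⁻¹ : Sˣ) : S) * a * P.e g⁻¹
            = (((U⁻¹ : Sˣ) : S) * P.e g⁻¹) * (a * P.e g⁻¹) := by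
          rw [show (((U⁻¹ : Sˣ) : S) * P.e g⁻¹) * (a * P.e g⁻¹)
              = ((U⁻¹ : Sˣ) : S) * a * (P.e g⁻¹ * P.e g⁻¹) by ring, P.e_idem]
        rw [harg, P.act_mul, ha g, hU g]
        calc P.act g (((U⁻¹ : Sˣ) : S) * P.e g⁻¹) *
              (c'.f g * (P.act g ((U : S) * P.e g⁻¹) * ((U⁻¹ : Sˣ) : S)) * a)
            = c'.f g * (P.act g (((U⁻¹ : Sˣ) : S) * P.e g⁻¹) * P.act g ((U : S) * P.e g⁻¹)) *
              (((U⁻¹ : Sˣ) : S) * a) := by ring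
        _ = c'.f g * P.e g * (((U⁻¹ : Sˣ) : S) * a) := by rw [hee g]
        _ = c'.f g * (((U⁻¹ : Sˣ) : S) * a) := by rw [c'.f_mem]
      set M := PartialAction.Qmod P R hR c.f with hM
      set M' := PartialAction.Qmod P R hR c'.f with hM'
      let mulU : M' →ₗ[R] M :=
        { toFun := fun b => ⟨(U : S) * (b : S), m1 _ b.2⟩
          map_add' := fun b₁ b₂ => Subtype.ext (by push_cast; ring)
          map_smul' := fun r b => Subtype.ext (by push_cast [hsmulS, RingHom.id_apply]; ring) }
      let mulUinv : M →ₗ[R] M' :=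
        { toFun := fun a => ⟨((U⁻¹ : Sˣ) : S) * (a : S), m2 _ a.2⟩
          map_add' := fun a₁ a₂ => Subtype.ext (by push_cast; ring)
          map_smul' := fun r a => Subtype.ext (by push_cast [hsmulS, RingHom.id_apply]; ring) }
      refine ⟨LinearEquiv.ofLinear mulUinv mulU ?_ ?_⟩
      · apply LinearMap.ext
        intro b
        apply Subtype.ext
        show ((U⁻¹ : Sˣ) : S) * ((U : S) * (b : S)) = (b : S)
        rw [← mul_assoc, Units.inv_mul, one_mul]
      · apply LinearMap.ext
        intro a
        apply Subtype.ext
        show (U : S) * (((U⁻¹ : Sˣ) : S) * (a : S)) = (a : S)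
        rw [← mul_assoc, Units.mul_inv, one_mul]
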